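/- Let Ψ be an infinite set, A a division ring equipped with an action of S_Ψ by ring automorphisms, and let T' ⊊ T be finite subsets of Ψ. For a finite set S, let Emb(S,Ψ) denote the set of injections S ↪ Ψ, with S_Ψ acting by postcomposition, and let A⟨Emb(S,Ψ)⟩ be the free left A-module on Emb(S,Ψ) with the action g•(a·[ι]) = (g•a)·[g∘ι]. Then there exist no nonzero S_Ψ-stable A-submodules M ⊆ A⟨Emb(T,Ψ)⟩ and M' ⊆ A⟨Emb(T',Ψ)⟩ admitting an A-linear S_Ψ-equivariant bijection M → M'. -/

import Mathlib

/-- The twisted action of a permutation `g` of `Ψ` on the free left `A`-module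
`A⟨Emb(S,Ψ)⟩` on the set of embeddings `S ↪ Ψ`: `g • (a·[ι]) = (φ g a)·[g ∘ ι]`. -/
noncomputable def embAct {Ψ A S : Type} [DivisionRing A]
    (φ : Equiv.Perm Ψ →* (A ≃+* A)) (g : Equiv.Perm Ψ)
    (x : (S ↪ Ψ) →₀ A) : (S ↪ Ψ) →₀ A :=
  Finsupp.mapDomain (fun ι : S ↪ Ψ => ι.trans g.toEmbedding)
    (x.mapRange (φ g) (map_zero _))

/-!
Take `x ≠ 0` in `M`, an embedding `ι` in its support, and a finite `F ⊆ Ψ` containing every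
point used by `x` and by `e x`. Sending each point `ι s` to one of `m` fresh points gives
`m ^ |T|` permutations `g_v`. The translates `g_v • x` are linearly independent, since `g_v • x`
is the only one that is nonzero at `g_v ∘ ι`. Each `g_v` maps `F` into a set `G` of size at most
`|F| + |T| m`, so all translates `g_v • e x = e (g_v • x)` lie in the span of the embeddings
`T' ↪ G`, of dimension at most `(|F| + |T| m) ^ |T'|`. For large `m` this is less than `m ^ |T|`,
contradicting the injectivity of `e`.
-/

open Function Finsupp Equiv

theorem exists_perm_apply_eq_of_forall_ne {Ψ S : Type*} (α β : S ↪ Ψ)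
    (hαβ : ∀ s s', α s ≠ β s') :
    ∃ g : Perm Ψ, (∀ s, g (α s) = β s) ∧
      ∀ q, q ∉ Set.range α → q ∉ Set.range β → g q = q := by
  -- `σ` exchanges `α s` with `β s` for every `s` and fixes all other points.
  set σ : Ψ → Ψ := extend α β (extend β α id) with hσ_def
  have hα : ∀ s, σ (α s) = β s := α.injective.extend_apply _ _
  have hβ : ∀ s, σ (β s) = α s := fun s => by
    rw [hσ_def, extend_apply' _ _ _ fun ⟨s', h⟩ => hαβ s' s h, β.injective.extend_apply]
  have hfix : ∀ q, q ∉ Set.range α → q ∉ Set.range β → σ q = q := fun q hqα hqβ => by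
    rw [hσ_def, extend_apply' _ _ _ hqα, extend_apply' _ _ _ hqβ, id]
  have hσ : Involutive σ := by
    intro q
    by_cases hqα : q ∈ Set.range α
    · obtain ⟨s, rfl⟩ := hqα
      rw [hα, hβ]
    by_cases hqβ : q ∈ Set.range β
    · obtain ⟨s, rfl⟩ := hqβ
      rw [hβ, hα]
    rw [hfix q hqα hqβ, hfix q hqα hqβ]
  exact ⟨hσ.toPerm σ, hα, hfix⟩

theorem exists_embedding_forall_notMem {Ψ : Type*} [Infinite Ψ] (W : Type*) [Finite W]
    (F : Finset Ψ) : ∃ u : W ↪ Ψ, ∀ w, u w ∉ F := by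
  have := Fintype.ofFinite W
  let fresh : ℕ ↪ ((↑F : Set Ψ)ᶜ : Set Ψ) := F.finite_toSet.infinite_compl.natEmbedding
  exact ⟨(Fintype.equivFin W).toEmbedding.trans
      (Fin.valEmbedding.trans (fresh.trans (Embedding.subtype _))),
    fun w => (fresh _).2⟩

theorem exists_perms_mapsTo_and_separating {Ψ : Type*} [Infinite Ψ] {S W : Type*}
    [Fintype S] [Fintype W] (F : Finset Ψ) (ι : S ↪ Ψ) (hι : ∀ s, ι s ∈ F) :
    ∃ (G : Finset Ψ) (g : (S → W) → Perm Ψ),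
      G.card ≤ F.card + Fintype.card S * Fintype.card W ∧
      (∀ v, Set.MapsTo (g v) F G) ∧
      ∀ v w, v ≠ w → ∃ s, (g v)⁻¹ (g w (ι s)) ∉ F := by
  classical
  obtain ⟨u, hu⟩ := exists_embedding_forall_notMem (S × W) F
  let uv (v : S → W) : S ↪ Ψ :=
    ⟨fun s => u (s, v s), fun s s' h => congrArg Prod.fst (u.injective h)⟩
  choose g hgι hgfix using fun v =>
    exists_perm_apply_eq_of_forall_ne ι (uv v) fun s s' h => hu _ (h ▸ hι s)
  have hu_range : ∀ z, u z ∉ Set.range ι := by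
    rintro z ⟨s, hs⟩
    exact hu z (hs ▸ hι s)
  refine ⟨F ∪ Finset.univ.map u, g, ?_, ?_, ?_⟩
  · calc (F ∪ Finset.univ.map u).card ≤ F.card + (Finset.univ.map u).card :=
          Finset.card_union_le _ _
      _ = F.card + Fintype.card S * Fintype.card W := by simp
  · intro v q hq
    by_cases hqι : q ∈ Set.range ι
    · obtain ⟨s, rfl⟩ := hqι
      rw [hgι]
      exact Finset.mem_union_right _ (Finset.mem_map_of_mem _ (Finset.mem_univ _))
    · rw [hgfix v q hqι (by rintro ⟨s, rfl⟩; exact hu _ hq)]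
      exact Finset.mem_union_left _ hq
  · intro v w hvw
    obtain ⟨s, hs⟩ := Function.ne_iff.mp hvw
    have hfix : g v (u (s, w s)) = u (s, w s) := by
      refine hgfix v _ (hu_range _) ?_
      rintro ⟨s', h⟩
      obtain ⟨rfl, h'⟩ := Prod.mk.inj (u.injective h)
      exact hs h'
    refine ⟨s, ?_⟩
    rw [hgι, show uv w s = u (s, w s) from rfl, Perm.inv_eq_iff_eq.mpr hfix.symm]
    exact hu _

theorem exists_add_mul_pow_lt_pow (c t t' : ℕ) (h : t' < t) :
    ∃ m, (c + t * m) ^ t' < m ^ t := by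
  set m := (c + t) ^ t' + 1
  have hm : 1 ≤ m := Nat.le_add_left 1 _
  refine ⟨m, ?_⟩
  calc (c + t * m) ^ t' ≤ ((c + t) * m) ^ t' := Nat.pow_le_pow_left (by nlinarith) _
    _ = (c + t) ^ t' * m ^ t' := mul_pow _ _ _
    _ < m * m ^ t' := Nat.mul_lt_mul_of_lt_of_le (Nat.lt_succ_self _) le_rfl (by positivity)
    _ = m ^ (t' + 1) := (pow_succ' _ _).symm
    _ ≤ m ^ t := Nat.pow_le_pow_right hm h

theorem Finsupp.not_linearIndependent_of_mem_supported {α V A : Type*} [DivisionRing A]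
    [Fintype V] {s : Set α} (hs : s.Finite) (y : V → α →₀ A)
    (hy : ∀ v, y v ∈ supported A A s) (hcard : Nat.card s < Fintype.card V) :
    ¬ LinearIndependent A y := by
  have := hs.to_subtype
  have := Fintype.ofFinite s
  intro hli
  have hli' : LinearIndependent A fun v => (⟨y v, hy v⟩ : supported A A s) :=
    .of_comp (supported A A s).subtype hli
  have := Module.Finite.equiv (supportedEquivFinsupp (M := A) (R := A) s).symm
  have hle := hli'.fintype_card_le_finrank
  rw [(supportedEquivFinsupp s).finrank_eq, Module.finrank_finsupp_self] at hle
  rw [Nat.card_eq_fintype_card] at hcard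
  omega

def embeddingsInto {Ψ : Type} (S : Type) (F : Set Ψ) : Set (S ↪ Ψ) := {κ | ∀ s, κ s ∈ F}

section Embeddings

variable {Ψ A S : Type} [DivisionRing A]

theorem embeddingsInto_mono {F F' : Set Ψ} (h : F ⊆ F') :
    embeddingsInto S F ⊆ embeddingsInto S F' :=
  fun _ hκ s => h (hκ s)

theorem injective_restrict_embeddingsInto (F : Set Ψ) :
    Injective fun κ : embeddingsInto S F => fun s => (⟨κ.1 s, κ.2 s⟩ : F) :=
  fun _ _ h => Subtype.ext <| Embedding.ext fun s => congrArg Subtype.val (congrFun h s)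

theorem finite_embeddingsInto [Finite S] (F : Finset Ψ) :
    (embeddingsInto S (F : Set Ψ)).Finite :=
  Set.finite_coe_iff.mp (Finite.of_injective _ (injective_restrict_embeddingsInto _))

theorem card_embeddingsInto_le [Finite S] (F : Finset Ψ) :
    Nat.card (embeddingsInto S (F : Set Ψ)) ≤ F.card ^ Nat.card S :=
  (Nat.card_le_card_of_injective _ (injective_restrict_embeddingsInto _)).trans_eq
    (by simp [Nat.card_fun])

theorem exists_finset_mem_supported_embeddingsInto [Finite S] (y : (S ↪ Ψ) →₀ A) :
    ∃ F : Finset Ψ, y ∈ supported A A (embeddingsInto S ↑F) := by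
  classical
  have := Fintype.ofFinite S
  refine ⟨y.support.biUnion fun κ => Finset.univ.map κ, (mem_supported A y).mpr fun κ hκ s => ?_⟩
  exact Finset.mem_biUnion.mpr ⟨κ, hκ, Finset.mem_map_of_mem _ (Finset.mem_univ s)⟩

theorem not_linearIndependent_of_mem_supported_embeddingsInto {V : Type*} [Finite S]
    [Fintype V] (G : Finset Ψ) (y : V → (S ↪ Ψ) →₀ A)
    (hy : ∀ v, y v ∈ supported A A (embeddingsInto S ↑G))
    (hcard : G.card ^ Nat.card S < Fintype.card V) : ¬ LinearIndependent A y :=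
  not_linearIndependent_of_mem_supported (finite_embeddingsInto G) y hy
    ((card_embeddingsInto_le G).trans_lt hcard)

variable (φ : Perm Ψ →* (A ≃+* A))

theorem embAct_apply (g : Perm Ψ) (x : (S ↪ Ψ) →₀ A) (κ : S ↪ Ψ) :
    embAct φ g x κ = φ g (x (κ.trans (g⁻¹ : Perm Ψ).toEmbedding)) := by
  have hinj : Injective fun κ : S ↪ Ψ => κ.trans g.toEmbedding := fun κ κ' h =>
    Embedding.ext fun s => g.injective (DFunLike.congr_fun h s)
  have hκ : (κ.trans (g⁻¹ : Perm Ψ).toEmbedding).trans g.toEmbedding = κ := by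
    ext s
    simp
  conv_lhs => rw [← hκ]
  exact (mapDomain_apply hinj _ _).trans (mapRange_apply ..)

theorem embAct_mem_supported_embeddingsInto {F G : Set Ψ} {g : Perm Ψ} (hg : Set.MapsTo g F G)
    {y : (S ↪ Ψ) →₀ A} (hy : y ∈ supported A A (embeddingsInto S F)) :
    embAct φ g y ∈ supported A A (embeddingsInto S G) := by
  rw [mem_supported'] at hy ⊢
  intro κ hκ
  rw [embAct_apply, hy, map_zero]
  intro hκF
  refine hκ fun s => ?_
  simpa using hg (hκF s)

theorem linearIndependent_embAct {V : Type*} [Fintype V] {F : Set Ψ} {x : (S ↪ Ψ) →₀ A}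
    (hx : x ∈ supported A A (embeddingsInto S F)) {ι : S ↪ Ψ} (hι : x ι ≠ 0)
    (g : V → Perm Ψ) (hg : ∀ v w, v ≠ w → ∃ s, (g v)⁻¹ (g w (ι s)) ∉ F) :
    LinearIndependent A fun v => embAct φ (g v) x := by
  rw [Fintype.linearIndependent_iff]
  intro c hc w
  have hoff : ∀ v, v ≠ w → embAct φ (g v) x (ι.trans (g w).toEmbedding) = 0 := by
    intro v hvw
    rw [embAct_apply, (mem_supported' A x).mp hx, map_zero]
    obtain ⟨s, hs⟩ := hg v w hvw
    exact fun h => hs (h s)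
  have hdiag : embAct φ (g w) x (ι.trans (g w).toEmbedding) = φ (g w) (x ι) := by
    rw [embAct_apply]
    congr
    ext
    simp
  have hcw := congrArg (· (ι.trans (g w).toEmbedding)) hc
  simp only [coe_finsetSum, Finset.sum_apply, coe_smul, Pi.smul_apply, smul_eq_mul,
    coe_zero, Pi.zero_apply] at hcw
  rw [Finset.sum_eq_single w (fun v _ hv => by rw [hoff v hv, mul_zero]) (by simp),
    hdiag] at hcw
  exact (mul_eq_zero.mp hcw).resolve_right ((map_ne_zero _).mpr hι)

theorem LinearIndependent.embAct_of_injective_equivariant {S' : Type} {V : Type*}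
    {M : Submodule A ((S ↪ Ψ) →₀ A)} {M' : Submodule A ((S' ↪ Ψ) →₀ A)} (e : M →ₗ[A] M')
    (he : Injective e) (hM : ∀ g : Perm Ψ, ∀ x ∈ M, embAct φ g x ∈ M)
    (heqv : ∀ (g : Perm Ψ) (x y : M), (y : (S ↪ Ψ) →₀ A) = embAct φ g x →
      (e y : (S' ↪ Ψ) →₀ A) = embAct φ g (e x))
    (x : M) (g : V → Perm Ψ)
    (hli : LinearIndependent A fun v => embAct φ (g v) (x : (S ↪ Ψ) →₀ A)) :
    LinearIndependent A fun v => embAct φ (g v) (e x : (S' ↪ Ψ) →₀ A) := by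
  let X : V → M := fun v => ⟨embAct φ (g v) x, hM (g v) x x.2⟩
  have hX : LinearIndependent A X := .of_comp M.subtype hli
  have heX : M'.subtype ∘ e ∘ X = fun v => embAct φ (g v) (e x : (S' ↪ Ψ) →₀ A) :=
    funext fun v => heqv (g v) x (X v) (by rfl)
  rw [← heX]
  exact (hX.map_injOn e he.injOn).map_injOn M'.subtype M'.injective_subtype.injOn

end Embeddings

/-- **No isomorphic nonzero stable submodules at different levels.**  `A` is a
division ring with an action `φ` of `S_Ψ` by ring automorphisms, `T' ⊊ T` are
finite subsets of the infinite set `Ψ`, and `A⟨Emb(T,Ψ)⟩`, `A⟨Emb(T',Ψ)⟩` are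
the free left `A`-modules on the sets of embeddings `T ↪ Ψ`, `T' ↪ Ψ` with the
twisted `S_Ψ`-actions.  Then there are no nonzero `S_Ψ`-stable `A`-submodules
`M ⊆ A⟨Emb(T,Ψ)⟩` and `M' ⊆ A⟨Emb(T',Ψ)⟩` admitting an `A`-linear
`S_Ψ`-equivariant bijection `M → M'`. -/
theorem no_isomorphic_stable_submodules_at_distinct_levels
    (Ψ : Type) [Infinite Ψ]
    (A : Type) [DivisionRing A]
    (φ : Equiv.Perm Ψ →* (A ≃+* A))
    (T T' : Finset Ψ) (hTT : T' ⊂ T) :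
    ¬ ∃ (M : Submodule A (({x // x ∈ T} ↪ Ψ) →₀ A))
        (M' : Submodule A (({x // x ∈ T'} ↪ Ψ) →₀ A)),
        (∀ g : Equiv.Perm Ψ, ∀ x ∈ M, embAct φ g x ∈ M) ∧
        (∀ g : Equiv.Perm Ψ, ∀ x ∈ M', embAct φ g x ∈ M') ∧
        M ≠ ⊥ ∧ M' ≠ ⊥ ∧
        ∃ e : M →ₗ[A] M', Function.Bijective e ∧
          ∀ (g : Equiv.Perm Ψ) (x y : M),
            (y : ({x // x ∈ T} ↪ Ψ) →₀ A) = embAct φ g (x : ({x // x ∈ T} ↪ Ψ) →₀ A) →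
            (e y : ({x // x ∈ T'} ↪ Ψ) →₀ A) = embAct φ g (e x : ({x // x ∈ T'} ↪ Ψ) →₀ A) := by
  classical
  rintro ⟨M, M', hM, -, hM0, -, e, ⟨he, -⟩, heqv⟩
  obtain ⟨x, hxM, hx0⟩ := (Submodule.ne_bot_iff M).mp hM0
  set x' := ((e ⟨x, hxM⟩ : M') : ({x // x ∈ T'} ↪ Ψ) →₀ A)
  obtain ⟨ι, hι⟩ := Finsupp.support_nonempty_iff.mpr hx0
  obtain ⟨F₁, hF₁⟩ := exists_finset_mem_supported_embeddingsInto x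
  obtain ⟨F₂, hF₂⟩ := exists_finset_mem_supported_embeddingsInto x'
  set F := F₁ ∪ F₂
  have hxF : x ∈ supported A A (embeddingsInto _ ↑F) :=
    supported_mono (embeddingsInto_mono (Finset.coe_subset.mpr Finset.subset_union_left)) hF₁
  have hx'F : x' ∈ supported A A (embeddingsInto _ ↑F) :=
    supported_mono (embeddingsInto_mono (Finset.coe_subset.mpr Finset.subset_union_right)) hF₂
  obtain ⟨m, hm⟩ := exists_add_mul_pow_lt_pow F.card T.card T'.card (Finset.card_lt_card hTT)
  obtain ⟨G, g, hG, hgG, hgF⟩ :=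
    exists_perms_mapsTo_and_separating (W := Fin m) F ι ((mem_supported A x).mp hxF hι)
  have hli := linearIndependent_embAct φ hxF (Finsupp.mem_support_iff.mp hι) g hgF
  refine not_linearIndependent_of_mem_supported_embeddingsInto G _
    (fun v => embAct_mem_supported_embeddingsInto φ (hgG v) hx'F) ?_
    (hli.embAct_of_injective_equivariant φ e he hM heqv ⟨x, hxM⟩ g)
  calc G.card ^ Nat.card {x // x ∈ T'} ≤ (F.card + T.card * m) ^ T'.card := by
        simpa using Nat.pow_le_pow_left hG _
    _ < m ^ T.card := hm
    _ = Fintype.card ({x // x ∈ T} → Fin m) := by simp
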